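/- Let B be a real m×n matrix with non-negative entries, n ≥ 1. Then there exists a non-zero vector η ∈ {0,1}ⁿ such that ‖Bη‖ ≥ (2/√(log n + 4))·‖B‖·‖η‖, where ‖B‖ denotes the operator norm of B with respect to the Euclidean norms. -/

import Mathlib

/-!
Let `c` be the largest ratio `‖B χ_S‖ / ‖χ_S‖` over indicator vectors of non-empty sets `S`;
it suffices to show `‖B‖ ≤ c · √(log n + 4) / 2`. As `B ≥ 0`, `‖B x‖ ≤ ‖B |x|‖`, so take `x ≥ 0`.
Sort its coordinates as `b₀ ≥ ⋯ ≥ b_{n-1} ≥ b_n = 0`; then `x = ∑ (bᵢ - bᵢ₊₁) χ_{Aᵢ}` with `Aᵢ`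
the `i + 1` largest coordinates, whence `‖B x‖ ≤ c ∑ (bᵢ - bᵢ₊₁) √(i+1) = c ∑ bᵢ (√(i+1) - √i)`.
By Cauchy–Schwarz this is at most `c ‖x‖ (∑ (√(i+1) - √i)²)^{1/2}`, and
`(√(i+1) - √i)² ≤ (log (i+1) - log i) / 4` for `i ≥ 1` bounds the last sum by `1 + log n / 4`.
-/

open Real Finset

lemma sq_sqrt_add_one_sub_sqrt_le {x : ℝ} (hx : 0 < x) :
    (√(x + 1) - √x) ^ 2 ≤ (log (x + 1) - log x) / 4 := by
  set r := √x
  set s := √(x + 1)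
  have hr : 0 < r := sqrt_pos.mpr hx
  have hr2 : r ^ 2 = x := sq_sqrt hx.le
  have hs2 : s ^ 2 = x + 1 := sq_sqrt (by linarith)
  have hrs : r ≤ s := sqrt_le_sqrt (by linarith)
  have hs : 0 < s := hr.trans_le hrs
  -- `2 (y - 1) / (y + 1) ≤ log y` at `y = s / r`, where `(s - r) / (s + r) = (s - r) ^ 2`
  -- because `s ^ 2 - r ^ 2 = 1`
  have hlog := le_log_one_add_of_nonneg (x := s / r - 1)
    (by rw [sub_nonneg, one_le_div hr]; exact hrs)
  have hleft : 2 * (s / r - 1) / (s / r - 1 + 2) = 2 * (s - r) ^ 2 := by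
    field_simp
    rw [div_eq_iff (by positivity)]
    linear_combination (r - s) * (hs2 - hr2)
  have hright : log (1 + (s / r - 1)) = (log (x + 1) - log x) / 2 := by
    rw [add_sub_cancel, log_div hs.ne' hr.ne', ← hs2, ← hr2, log_pow, log_pow]
    push_cast; ring
  linarith

lemma sum_range_sq_sqrt_succ_sub_sqrt_le (n : ℕ) :
    ∑ i ∈ range n, (√(i + 1) - √i) ^ 2 ≤ (log n + 4) / 4 := by
  induction n with
  | zero => simp
  | succ n ih =>
    rw [sum_range_succ]
    rcases Nat.eq_zero_or_pos n with rfl | hn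
    · simp
    · have := sq_sqrt_add_one_sub_sqrt_le (x := n) (by exact_mod_cast hn)
      push_cast
      linarith

lemma sum_range_sub_mul_sqrt_eq (b : ℕ → ℝ) (n : ℕ) :
    ∑ i ∈ range n, (b i - b (i + 1)) * √(i + 1)
      = ∑ i ∈ range n, b i * (√(i + 1) - √i) - b n * √n := by
  induction n with
  | zero => simp
  | succ n ih =>
    rw [sum_range_succ, sum_range_succ, ih]
    push_cast
    ring

lemma sum_range_sub_mul_sqrt_le (b : ℕ → ℝ) {n : ℕ} (hb : b n = 0) :
    ∑ i ∈ range n, (b i - b (i + 1)) * √(i + 1)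
      ≤ √(∑ i ∈ range n, b i ^ 2) * (√(log n + 4) / 2) := by
  have hK : √(∑ i ∈ range n, (√(i + 1) - √i) ^ 2) ≤ √(log n + 4) / 2 := by
    rw [show √(log n + 4) / 2 = √((log n + 4) / 4) by
      rw [sqrt_div' _ (by norm_num), show (4 : ℝ) = 2 ^ 2 by norm_num, sqrt_sq (by norm_num)]]
    exact sqrt_le_sqrt (sum_range_sq_sqrt_succ_sub_sqrt_le n)
  rw [sum_range_sub_mul_sqrt_eq, hb, zero_mul, sub_zero]
  exact (sum_mul_le_sqrt_mul_sqrt _ _ _).trans (by gcongr)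

noncomputable def indicatorVec {ι : Type*} [Fintype ι] [DecidableEq ι] (S : Finset ι) :
    EuclideanSpace ℝ ι :=
  WithLp.toLp 2 fun j => if j ∈ S then 1 else 0

section indicatorVec

variable {ι : Type*} [Fintype ι] [DecidableEq ι]

lemma indicatorVec_apply (S : Finset ι) (j : ι) :
    indicatorVec S j = if j ∈ S then 1 else 0 := rfl

lemma norm_indicatorVec (S : Finset ι) : ‖indicatorVec S‖ = √(#S : ℝ) := by
  simp [EuclideanSpace.norm_eq, indicatorVec_apply, apply_ite]

@[simp]
lemma indicatorVec_empty : indicatorVec (∅ : Finset ι) = 0 := by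
  ext j
  simp [indicatorVec_apply]

lemma indicatorVec_apply_eq_zero_or_one (S : Finset ι) (j : ι) :
    indicatorVec S j = 0 ∨ indicatorVec S j = 1 := by
  rw [indicatorVec_apply]
  split_ifs
  exacts [Or.inr rfl, Or.inl rfl]

lemma indicatorVec_ne_zero {S : Finset ι} (hS : S.Nonempty) : indicatorVec S ≠ 0 := by
  rw [← norm_pos_iff, norm_indicatorVec]
  exact sqrt_pos.mpr (by exact_mod_cast hS.card_pos)

lemma exists_indicatorVec_norm_ratio_max [Nonempty ι] {F : Type*} [SeminormedAddCommGroup F]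
    [Module ℝ F] (T : EuclideanSpace ℝ ι →ₗ[ℝ] F) :
    ∃ S : Finset ι, S.Nonempty ∧ ∀ S',
      ‖T (indicatorVec S')‖ ≤ ‖T (indicatorVec S)‖ / ‖indicatorVec S‖ * ‖indicatorVec S'‖ := by
  obtain ⟨S, hS, hmax⟩ := exists_max_image (univ.filter fun S : Finset ι => S.Nonempty)
    (fun S => ‖T (indicatorVec S)‖ / ‖indicatorVec S‖) ⟨univ, by simp⟩
  refine ⟨S, (mem_filter.mp hS).2, fun S' => ?_⟩
  rcases S'.eq_empty_or_nonempty with rfl | hS'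
  · simp
  · exact (div_le_iff₀ (norm_pos_iff.mpr (indicatorVec_ne_zero hS'))).mp
      (hmax S' (mem_filter.mpr ⟨mem_univ _, hS'⟩))

end indicatorVec

lemma exists_perm_antitone {n : ℕ} {α : Type*} [LinearOrder α] (u : Fin n → α) :
    ∃ σ : Equiv.Perm (Fin n), Antitone (u ∘ σ) :=
  ⟨Tuple.sort u * Fin.revPerm, fun _ _ h => Tuple.monotone_sort u (Fin.rev_anti h)⟩

lemma sum_range_ite_le_sub_succ {b : ℕ → ℝ} {n k : ℕ} (hk : k ≤ n) (hb : b n = 0) :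
    ∑ i ∈ range n, (if k ≤ i then b i - b (i + 1) else 0) = b k := by
  rw [← sum_filter, show (range n).filter (k ≤ ·) = Ico k n by ext; simp [and_comm],
    ← neg_inj, ← sum_neg_distrib]
  simp only [neg_sub]
  rw [sum_Ico_sub b hk, hb, zero_sub]

section rank

variable {n : ℕ} (σ : Equiv.Perm (Fin n))

noncomputable def rankedCoord (u : EuclideanSpace ℝ (Fin n)) (i : ℕ) : ℝ :=
  if h : i < n then u (σ ⟨i, h⟩) else 0

def rankLE (i : ℕ) : Finset (Fin n) :=
  univ.filter fun j => (σ.symm j : ℕ) ≤ i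

variable (u : EuclideanSpace ℝ (Fin n))

lemma rankedCoord_self : rankedCoord σ u n = 0 := by
  simp [rankedCoord]

lemma rankedCoord_symm (j : Fin n) : rankedCoord σ u (σ.symm j) = u j := by
  simp [rankedCoord]

lemma card_rankLE_le (i : ℕ) : #(rankLE σ i) ≤ i + 1 := by
  refine (card_le_card_of_injOn (fun j => (σ.symm j : ℕ)) (t := range (i + 1)) ?_ ?_).trans_eq
    (card_range _)
  · intro j hj
    simp_all [rankLE]
  · intro j _ j' _ h
    exact σ.symm.injective (Fin.ext h)

lemma sum_range_rankedCoord_sq : ∑ i ∈ range n, rankedCoord σ u i ^ 2 = ‖u‖ ^ 2 := by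
  rw [← Fin.sum_univ_eq_sum_range, EuclideanSpace.real_norm_sq_eq,
    ← Equiv.sum_comp σ (fun j => u j ^ 2)]
  simp [rankedCoord]

lemma sum_rankedCoord_sub_smul_indicatorVec :
    ∑ i ∈ range n, (rankedCoord σ u i - rankedCoord σ u (i + 1)) • indicatorVec (rankLE σ i)
      = u := by
  ext j
  simp only [WithLp.ofLp_sum, WithLp.ofLp_smul, Finset.sum_apply, Pi.smul_apply,
    indicatorVec_apply, rankLE, mem_filter, mem_univ, true_and, smul_eq_mul, mul_ite, mul_one,
    mul_zero]
  rw [sum_range_ite_le_sub_succ (σ.symm j).is_lt.le (rankedCoord_self σ u), rankedCoord_symm]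

lemma rankedCoord_succ_le (hσ : Antitone (u ∘ σ)) (hu : ∀ j, 0 ≤ u j) (i : ℕ) :
    rankedCoord σ u (i + 1) ≤ rankedCoord σ u i := by
  unfold rankedCoord
  split_ifs
  · exact hσ (Fin.mk_le_mk.mpr i.le_succ)
  · omega
  · exact hu _
  · rfl

end rank

lemma norm_apply_le_of_nonneg_of_indicatorVec_le {n : ℕ} {F : Type*} [SeminormedAddCommGroup F]
    [NormedSpace ℝ F]
    (T : EuclideanSpace ℝ (Fin n) →ₗ[ℝ] F) {c : ℝ} (hc : 0 ≤ c)
    (hT : ∀ S, ‖T (indicatorVec S)‖ ≤ c * ‖indicatorVec S‖)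
    {u : EuclideanSpace ℝ (Fin n)} (hu : ∀ j, 0 ≤ u j) :
    ‖T u‖ ≤ c * (√(log n + 4) / 2) * ‖u‖ := by
  obtain ⟨σ, hσ⟩ := exists_perm_antitone u
  set b := rankedCoord σ u
  have hstep : ∀ i ∈ range n, ‖(b i - b (i + 1)) • T (indicatorVec (rankLE σ i))‖
      ≤ c * ((b i - b (i + 1)) * √(i + 1)) := by
    intro i _
    have hb : 0 ≤ b i - b (i + 1) := sub_nonneg.mpr (rankedCoord_succ_le σ u hσ hu i)
    have hcard : √(#(rankLE σ i) : ℝ) ≤ √(i + 1) :=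
      sqrt_le_sqrt (by exact_mod_cast card_rankLE_le σ i)
    rw [norm_smul, norm_of_nonneg hb]
    calc (b i - b (i + 1)) * ‖T (indicatorVec (rankLE σ i))‖
        ≤ (b i - b (i + 1)) * (c * √(i + 1)) := by
          gcongr
          exact (hT _).trans (by rw [norm_indicatorVec]; exact mul_le_mul_of_nonneg_left hcard hc)
      _ = c * ((b i - b (i + 1)) * √(i + 1)) := by ring
  calc ‖T u‖ = ‖T (∑ i ∈ range n, (b i - b (i + 1)) • indicatorVec (rankLE σ i))‖ := by
        rw [sum_rankedCoord_sub_smul_indicatorVec]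
    _ ≤ c * ∑ i ∈ range n, (b i - b (i + 1)) * √(i + 1) := by
        simp only [map_sum, map_smul, mul_sum]
        exact (norm_sum_le _ _).trans (sum_le_sum hstep)
    _ ≤ c * (√(∑ i ∈ range n, b i ^ 2) * (√(log n + 4) / 2)) := by
        gcongr; exact sum_range_sub_mul_sqrt_le b (rankedCoord_self σ u)
    _ = c * (√(log n + 4) / 2) * ‖u‖ := by
        rw [sum_range_rankedCoord_sq, sqrt_sq (norm_nonneg u)]; ring

lemma norm_toEuclideanLin_le_of_abs_le {m n : Type*} [Fintype m] [Fintype n] [DecidableEq n]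
    {B : Matrix m n ℝ} (hB : ∀ i j, 0 ≤ B i j) {x y : EuclideanSpace ℝ n}
    (hxy : ∀ j, |x j| ≤ y j) :
    ‖Matrix.toEuclideanLin B x‖ ≤ ‖Matrix.toEuclideanLin B y‖ := by
  simp only [EuclideanSpace.norm_eq, Real.norm_eq_abs, Matrix.toLpLin_apply]
  refine sqrt_le_sqrt (sum_le_sum fun i _ => pow_le_pow_left₀ (abs_nonneg _) ?_ 2)
  calc |B.mulVec x i| ≤ ∑ j, |B i j * x j| := abs_sum_le_sum_abs _ _
    _ ≤ B.mulVec y i := sum_le_sum fun j _ => by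
        rw [abs_mul, abs_of_nonneg (hB i j)]
        exact mul_le_mul_of_nonneg_left (hxy j) (hB i j)
    _ ≤ |B.mulVec y i| := le_abs_self _

lemma opNorm_toEuclideanLin_le_of_indicatorVec_le {m : Type*} [Fintype m] {n : ℕ}
    {B : Matrix m (Fin n) ℝ} (hB : ∀ i j, 0 ≤ B i j) {c : ℝ} (hc : 0 ≤ c)
    (hT : ∀ S, ‖Matrix.toEuclideanLin B (indicatorVec S)‖ ≤ c * ‖indicatorVec S‖) :
    ‖LinearMap.toContinuousLinearMap (Matrix.toEuclideanLin B)‖ ≤ c * (√(log n + 4) / 2) := by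
  refine ContinuousLinearMap.opNorm_le_bound _ (by positivity) fun x => ?_
  have habs : ‖(WithLp.toLp 2 fun j => |x j| : EuclideanSpace ℝ (Fin n))‖ = ‖x‖ := by
    simp only [EuclideanSpace.norm_eq, Real.norm_eq_abs, abs_abs]
  rw [LinearMap.coe_toContinuousLinearMap', ← habs]
  exact (norm_toEuclideanLin_le_of_abs_le hB fun j => le_rfl).trans
    (norm_apply_le_of_nonneg_of_indicatorVec_le _ hc hT fun j => abs_nonneg _)

/-- For any real `m × n` matrix `B` with non-negative entries there is a non-zero
`η ∈ {0,1}ⁿ` with `‖Bη‖ ≥ (2/√(log n + 4))·‖B‖·‖η‖`, where `‖B‖` is the operator norm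
of `B` with respect to the Euclidean norms. -/
theorem statement17 (m n : ℕ) (hn : 1 ≤ n) (B : Matrix (Fin m) (Fin n) ℝ)
    (hB : ∀ i j, 0 ≤ B i j) :
    ∃ η : EuclideanSpace ℝ (Fin n), η ≠ 0 ∧ (∀ j, η j = 0 ∨ η j = 1) ∧
      ‖Matrix.toEuclideanLin B η‖ ≥ (2 / Real.sqrt (Real.log n + 4)) *
        (‖LinearMap.toContinuousLinearMap (Matrix.toEuclideanLin B)‖ * ‖η‖) := by
  have : Nonempty (Fin n) := ⟨⟨0, hn⟩⟩
  obtain ⟨S, hS, hmax⟩ := exists_indicatorVec_norm_ratio_max (Matrix.toEuclideanLin B)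
  set η := indicatorVec S
  set c := ‖Matrix.toEuclideanLin B η‖ / ‖η‖
  have hη : 0 < ‖η‖ := norm_pos_iff.mpr (indicatorVec_ne_zero hS)
  have hop := opNorm_toEuclideanLin_le_of_indicatorVec_le hB (by positivity) hmax
  refine ⟨η, indicatorVec_ne_zero hS, indicatorVec_apply_eq_zero_or_one S, ?_⟩
  calc 2 / √(log n + 4) * (‖LinearMap.toContinuousLinearMap (Matrix.toEuclideanLin B)‖ * ‖η‖)
      ≤ 2 / √(log n + 4) * (c * (√(log n + 4) / 2) * ‖η‖) := by gcongr
    _ = c * ‖η‖ := by field_simp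
    _ = ‖Matrix.toEuclideanLin B η‖ := div_mul_cancel₀ _ hη.ne'
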